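/- arXiv:2306.11904 — 5 statements merged into one kernel-verified Lean document; each statement's English description precedes it below -/
import Mathlib

section
/- Let S be a real normed space, υ a unit vector in S, L_υ the line generated by υ, and f a supporting functional for υ (i.e., f is a bounded linear functional with |f(x)| ≤ ‖x‖ for all x and f(υ) = 1). If x, y ∈ S are each at distance at most 1/8 from L_υ and ‖x - y‖ ≥ 1, then |f(x) - f(y)| ≥ 1/2. -/
/-!
Let `P z = z - f z • υ` be the projection onto `ker f` along `υ`. It has norm at most `2` and
kills the line `L`, so `‖P z‖ ≤ 2 d(z, L)`. Splitting `x - y = P x - P y + (f x - f y) • υ` gives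
`‖x - y‖ ≤ 2 d(x, L) + 2 d(y, L) + |f x - f y|`, i.e. `1 ≤ 1/4 + 1/4 + |f x - f y|`.
-/

open Metric Set

section

variable {S : Type*} [NormedAddCommGroup S] [NormedSpace ℝ S] {f : S →L[ℝ] ℝ} {υ : S}

lemma norm_sub_smul_le_two_mul (hf : ∀ z, |f z| ≤ ‖z‖) (hυ : ‖υ‖ ≤ 1) (z : S) :
    ‖z - f z • υ‖ ≤ 2 * ‖z‖ :=
  calc ‖z - f z • υ‖ ≤ ‖z‖ + |f z| * ‖υ‖ := by
        simpa only [norm_smul, Real.norm_eq_abs] using norm_sub_le z (f z • υ)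
    _ ≤ ‖z‖ + ‖z‖ * 1 := by gcongr; exact hf z
    _ = 2 * ‖z‖ := by ring

lemma sub_smul_eq_sub_smul_sub (hfυ : f υ = 1) (z : S) (t : ℝ) :
    z - f z • υ = (z - t • υ) - f (z - t • υ) • υ := by
  simp only [map_sub, map_smul, hfυ, smul_eq_mul, mul_one, sub_smul]
  abel

lemma norm_sub_smul_le_two_mul_infDist (hf : ∀ z, |f z| ≤ ‖z‖) (hυ : ‖υ‖ ≤ 1) (hfυ : f υ = 1)
    (z : S) : ‖z - f z • υ‖ ≤ 2 * infDist z (range fun t : ℝ => t • υ) := by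
  have key : ‖z - f z • υ‖ / 2 ≤ infDist z (range fun t : ℝ => t • υ) := by
    refine (le_infDist (range_nonempty _)).2 ?_
    rintro _ ⟨t, rfl⟩
    rw [dist_eq_norm, sub_smul_eq_sub_smul_sub hfυ z t]
    linarith [norm_sub_smul_le_two_mul hf hυ (z - t • υ)]
  linarith

lemma norm_sub_le_norm_sub_smul_add (hυ : ‖υ‖ ≤ 1) (x y : S) :
    ‖x - y‖ ≤ ‖x - f x • υ‖ + ‖y - f y • υ‖ + |f x - f y| := by
  have split : x - y = (x - f x • υ) - (y - f y • υ) + (f x - f y) • υ := by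
    rw [sub_smul]; abel
  calc ‖x - y‖ ≤ ‖x - f x • υ‖ + ‖y - f y • υ‖ + |f x - f y| * ‖υ‖ := by
        rw [split, ← Real.norm_eq_abs, ← norm_smul]
        exact (norm_add_le _ _).trans (add_le_add_left (norm_sub_le _ _) _)
    _ ≤ ‖x - f x • υ‖ + ‖y - f y • υ‖ + |f x - f y| * 1 := by gcongr
    _ = _ := by rw [mul_one]

end

theorem supporting_functional_separation
    {S : Type*} [NormedAddCommGroup S] [NormedSpace ℝ S]
    (υ : S) (hυ : ‖υ‖ = 1)
    (f : S →L[ℝ] ℝ) (hf : ∀ x : S, |f x| ≤ ‖x‖) (hfυ : f υ = 1)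
    (L : Set S) (hL : L = Set.range (fun t : ℝ => t • υ))
    (x y : S)
    (hx : Metric.infDist x L ≤ 1 / 8)
    (hy : Metric.infDist y L ≤ 1 / 8)
    (hxy : 1 ≤ ‖x - y‖) :
    (1 : ℝ) / 2 ≤ |f x - f y| := by
  subst hL
  have hPx := norm_sub_smul_le_two_mul_infDist hf hυ.le hfυ x
  have hPy := norm_sub_smul_le_two_mul_infDist hf hυ.le hfυ y
  have hsplit := norm_sub_le_norm_sub_smul_add (f := f) hυ.le x y
  linarith
end

section
/- Let G be the distance graph of points x₁,...,x_N in ℝ^d (with Euclidean norm), where vertices are the points (distinguished by index) and two points are adjacent if their distance is strictly less than 1. Assume each point is at Euclidean distance at most √3/4 from the line generated by (1,0,...,0). Then G contains no induced cycle of length 5 or more. -/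
open SimpleGraph

/-- The distance graph of a sequence of points: indices `i ≠ j` are adjacent
when the corresponding points are at distance `< 1`. -/
def distGraph {E : Type*} [NormedAddCommGroup E] {N : ℕ} (x : Fin N → E) :
    SimpleGraph (Fin N) where
  Adj i j := i ≠ j ∧ ‖x i - x j‖ < 1
  symm := by
    constructor
    intro i j ⟨hij, hd⟩
    exact ⟨hij.symm, by rwa [norm_sub_rev]⟩
  loopless := by constructor; intro i ⟨h, _⟩; exact h rfl

/-!
Write `a i` for the coordinate of `x i` along the line. Since every point lies within `√3/4` of
the line, two points differ by at most `√3/2` orthogonally to it, so non-adjacent points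
(distance `≥ 1`) have `|a i - a j| ≥ 1/2`, while adjacent ones have `|a i - a j| < 1`.
No cycle of length `n ≥ 5` admits such coordinates: at a vertex `m` minimising `a`, the two
neighbours `m ± 1` are non-adjacent, so one of them, say `q`, lies at least `1/2` above the
other, `p`. The vertex `r` beyond `p` is non-adjacent to `m` and to `q`, hence sits at least `1/2`
above `a m`; it cannot then be `1/2` below `a q < a m + 1`, nor `1/2` above `a q ≥ a p + 1/2`,
as it is adjacent to `p`.
-/

open scoped RealInnerProductSpace

structure SimpleGraph.IsQuasiIntervalRep {V : Type*} (G : SimpleGraph V) (a : V → ℝ) :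
    Prop where
  lt_one_of_adj : ∀ ⦃i j⦄, G.Adj i j → |a i - a j| < 1
  half_le_of_compl_adj : ∀ ⦃i j⦄, Gᶜ.Adj i j → 1 / 2 ≤ |a i - a j|

namespace SimpleGraph.IsQuasiIntervalRep

variable {V W : Type*} {G : SimpleGraph V} {a : V → ℝ}

theorem comp_embedding (h : G.IsQuasiIntervalRep a) {H : SimpleGraph W} (φ : H ↪g G) :
    H.IsQuasiIntervalRep (a ∘ φ) where
  lt_one_of_adj _ _ hij := h.lt_one_of_adj (φ.map_adj_iff.2 hij)
  half_le_of_compl_adj _ _ hij :=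
    h.half_le_of_compl_adj ((Embedding.complEquiv φ).map_adj_iff.2 hij)

theorem lt_add_half_of_isMin (h : G.IsQuasiIntervalRep a) {m p q r : V} (hm : ∀ v, a m ≤ a v)
    (hmq : G.Adj m q) (hpr : G.Adj p r) (hmr : Gᶜ.Adj m r) (hqr : Gᶜ.Adj q r) :
    a q < a p + 1 / 2 := by
  by_contra! hpq
  have hq := abs_lt.1 (h.lt_one_of_adj hmq)
  have hr := abs_lt.1 (h.lt_one_of_adj hpr)
  have := hm p
  have := hm r
  rcases le_abs.1 (h.half_le_of_compl_adj hmr) with hr₁ | hr₁ <;>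
    rcases le_abs.1 (h.half_le_of_compl_adj hqr) with hr₂ | hr₂ <;> linarith

end SimpleGraph.IsQuasiIntervalRep

open Fin.NatCast Fin.CommRing in
theorem cycleGraph_compl_adj_of_sub_eq {n k : ℕ} {i j : Fin (n + 2)} (hij : j - i = k)
    (hk : 2 ≤ k) (hkn : k ≤ n) : (cycleGraph (n + 2))ᶜ.Adj i j := by
  rw [compl_adj, cycleGraph_adj, ← neg_sub j i, hij, ne_comm, ne_eq, ← sub_eq_zero, hij,
    neg_eq_iff_eq_neg]
  simp [Fin.ext_iff, Fin.val_neg, Nat.mod_eq_of_lt (show k < n + 2 by omega)]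
  omega

open Fin.CommRing in
theorem not_isQuasiIntervalRep_cycleGraph {n : ℕ} (hn : 5 ≤ n) (a : Fin n → ℝ) :
    ¬ (cycleGraph n).IsQuasiIntervalRep a := by
  obtain ⟨n, rfl⟩ : ∃ k, n = k + 2 := ⟨n - 2, by omega⟩
  intro h
  obtain ⟨m, hm⟩ := Finite.exists_min a
  have adj (i j : Fin (n + 2)) (hij : j - i = 1) : (cycleGraph (n + 2)).Adj i j :=
    cycleGraph_adj.2 (Or.inr hij)
  have far (i j : Fin (n + 2)) (k : ℕ) (hij : j - i = k) (hk : 2 ≤ k ∧ k ≤ 3) :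
      (cycleGraph (n + 2))ᶜ.Adj i j :=
    cycleGraph_compl_adj_of_sub_eq hij hk.1 (by omega)
  have h₁ := h.lt_add_half_of_isMin hm (adj (m - 1) m (by ring)).symm
      (adj (m + 1) (m + 2) (by ring)) (far m (m + 2) 2 (by push_cast; ring) (by norm_num))
      (far (m - 1) (m + 2) 3 (by push_cast; ring) (by norm_num))
  have h₂ := h.lt_add_half_of_isMin hm (adj m (m + 1) (by ring))
      (adj (m - 2) (m - 1) (by ring)).symm (far (m - 2) m 2 (by push_cast; ring) (by norm_num)).symm
      (far (m - 2) (m + 1) 3 (by push_cast; ring) (by norm_num)).symm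
  have h₃ := h.half_le_of_compl_adj (far (m - 1) (m + 1) 2 (by push_cast; ring) (by norm_num))
  exact h₃.not_gt (abs_sub_lt_iff.2 ⟨by linarith, by linarith⟩)

section

variable {𝕜 E : Type*} [RCLike 𝕜] [NormedAddCommGroup E] [InnerProductSpace 𝕜 E]

theorem Submodule.infDist_eq_norm_sub_starProjection (K : Submodule 𝕜 E)
    [K.HasOrthogonalProjection] (x : E) : Metric.infDist x K = ‖x - K.starProjection x‖ := by
  rw [Metric.infDist_eq_iInf, K.starProjection_minimal]
  simp only [dist_eq_norm]
  rfl

theorem Submodule.norm_sub_sq_le_of_infDist_le (K : Submodule 𝕜 E) [K.HasOrthogonalProjection]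
    {x y : E} {r : ℝ} (hx : Metric.infDist x K ≤ r) (hy : Metric.infDist y K ≤ r) :
    ‖x - y‖ ^ 2 ≤ ‖K.starProjection (x - y)‖ ^ 2 + (2 * r) ^ 2 := by
  rw [K.infDist_eq_norm_sub_starProjection] at hx hy
  have hres : ‖Kᗮ.starProjection (x - y)‖ ≤ 2 * r := calc ‖Kᗮ.starProjection (x - y)‖
    _ = ‖(x - K.starProjection x) - (y - K.starProjection y)‖ := by
      rw [K.starProjection_orthogonal_val, map_sub, sub_sub_sub_comm]
    _ ≤ ‖x - K.starProjection x‖ + ‖y - K.starProjection y‖ := norm_sub_le _ _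
    _ ≤ 2 * r := by linarith
  rw [norm_sq_eq_add_norm_sq_starProjection (x - y) K]
  gcongr

end

theorem isQuasiIntervalRep_distGraph_inner {E : Type*} [NormedAddCommGroup E]
    [InnerProductSpace ℝ E] {N : ℕ} {x : Fin N → E} {e : E} (he : ‖e‖ = 1)
    (hx : ∀ i, Metric.infDist (x i) (Set.range fun t : ℝ => t • e) ≤ √3 / 4) :
    (distGraph x).IsQuasiIntervalRep (fun i => ⟪e, x i⟫) := by
  simp only [← Submodule.span_singleton_eq_range] at hx
  refine ⟨fun i j hij => ?_, fun i j hij => ?_⟩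
  · rw [← inner_sub_right]
    calc |⟪e, x i - x j⟫| ≤ ‖e‖ * ‖x i - x j‖ := abs_real_inner_le_norm _ _
      _ < 1 := by rw [he, one_mul]; exact hij.2
  · obtain ⟨hne, hnadj⟩ := (compl_adj _ _ _).1 hij
    have hfar : 1 ≤ ‖x i - x j‖ := not_lt.1 fun h => hnadj ⟨hne, h⟩
    have key := (ℝ ∙ e).norm_sub_sq_le_of_infDist_le (hx i) (hx j)
    have hr : (2 * (√3 / 4)) ^ 2 = 3 / 4 := by
      rw [mul_pow, div_pow, Real.sq_sqrt zero_le_three]; norm_num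
    rw [Submodule.starProjection_unit_singleton ℝ he, norm_smul, he, mul_one, Real.norm_eq_abs,
      inner_sub_right, hr] at key
    nlinarith [abs_nonneg (⟪e, x i⟫ - ⟪e, x j⟫)]

theorem distGraph_no_long_induced_cycle
    (d N : ℕ) (hd : 1 ≤ d) (x : Fin N → EuclideanSpace ℝ (Fin d))
    (e1 : EuclideanSpace ℝ (Fin d))
    (he1 : e1 = EuclideanSpace.single (⟨0, by omega⟩ : Fin d) (1 : ℝ))
    (L : Set (EuclideanSpace ℝ (Fin d)))
    (hL : L = Set.range (fun t : ℝ => t • e1))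
    (hx : ∀ i, Metric.infDist (x i) L ≤ Real.sqrt 3 / 4) :
    ¬ ∃ n : ℕ, 5 ≤ n ∧ Nonempty (SimpleGraph.cycleGraph n ↪g distGraph x) := by
  rintro ⟨n, hn, ⟨φ⟩⟩
  subst hL
  have he : ‖e1‖ = 1 := by simp [he1]
  exact not_isQuasiIntervalRep_cycleGraph hn _
    ((isQuasiIntervalRep_distGraph_inner he hx).comp_embedding φ)
end

section
/- A distance graph G of a finite sequence of points in ℝ^d, each at Euclidean distance at most √3/4 from a fixed line, is a perfect graph. -/
/-!
Let `t i = ⟪x i, υ⟫` be the position of `x i` along the line. The components of the points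
orthogonal to the line differ by at most `√3 / 2`, so non-adjacent points have
`|t i - t j| ≥ 1 / 2`, while `|t i - t j| ≥ 1` forces non-adjacency. Hence orienting the non-edges
by increasing `t` is transitive: the complement of the distance graph is a comparability graph.
Its cliques are antichains and its colour classes can be taken to be chains, so by Dilworth's
theorem every induced subgraph has chromatic number equal to clique number.
-/

open SimpleGraph

/-- A finite graph is perfect if for every induced subgraph the chromatic number
equals the clique number. -/
def IsPerfect {V : Type*} [Fintype V] (G : SimpleGraph V) : Prop :=
  ∀ s : Set V, (G.induce s).chromaticNumber = ((G.induce s).cliqueNum : ℕ∞)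

namespace SimpleGraph

variable {V β : Type*} [LinearOrder β] {G : SimpleGraph V} {t : V → β}

/-- `Gᶜ` is the comparability graph of the partial order `u ≺ v ↔ ¬G.Adj u v ∧ t u < t v`,
of which `t` is a linear extension. -/
structure IsCocomparabilityOrder (G : SimpleGraph V) (t : V → β) : Prop where
  ne_of_not_adj : ∀ ⦃u v⦄, u ≠ v → ¬G.Adj u v → t u ≠ t v
  not_adj_trans : ∀ ⦃u v w⦄, ¬G.Adj u v → ¬G.Adj v w → t u < t v → t v < t w → ¬G.Adj u w

theorem IsCocomparabilityOrder.induce (hG : G.IsCocomparabilityOrder t) (s : Set V) :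
    (G.induce s).IsCocomparabilityOrder fun v : s => t v where
  ne_of_not_adj _ _ huv := hG.ne_of_not_adj (Subtype.coe_ne_coe.mpr huv)
  not_adj_trans u v w := @hG.not_adj_trans u v w

section Finset

open Finset

variable {s K Q : Finset V} {k m : ℕ} {f : V → ℕ}

open Classical in
noncomputable def cliqueNumOn (G : SimpleGraph V) (s : Finset V) : ℕ :=
  (s.powerset.filter fun Q : Finset V => G.IsClique (Q : Set V)).sup card

theorem IsClique.card_le_cliqueNumOn (hQs : Q ⊆ s) (hQ : G.IsClique (Q : Set V)) :
    #Q ≤ G.cliqueNumOn s := by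
  classical
  exact le_sup (f := card) (mem_filter.mpr ⟨mem_powerset.mpr hQs, hQ⟩)

theorem exists_isNClique_cliqueNumOn (G : SimpleGraph V) (s : Finset V) :
    ∃ Q ⊆ s, G.IsNClique (G.cliqueNumOn s) Q := by
  classical
  obtain ⟨Q, hQ, hQcard⟩ := exists_mem_eq_sup
    (s.powerset.filter fun Q : Finset V => G.IsClique (Q : Set V)) ⟨∅, by simp⟩ card
  rw [mem_filter, mem_powerset] at hQ
  exact ⟨Q, hQ.1, hQ.2, by rw [cliqueNumOn, hQcard]⟩

theorem cliqueNumOn_mono {u : Finset V} (h : s ⊆ u) : G.cliqueNumOn s ≤ G.cliqueNumOn u := by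
  obtain ⟨Q, hQs, hQ⟩ := G.exists_isNClique_cliqueNumOn s
  exact hQ.card_eq ▸ hQ.isClique.card_le_cliqueNumOn (hQs.trans h)

structure IsColoringOn (G : SimpleGraph V) (s : Finset V) (k : ℕ) (f : V → ℕ) : Prop where
  lt : ∀ v ∈ s, f v < k
  ne : ∀ v ∈ s, ∀ w ∈ s, G.Adj v w → f v ≠ f w

theorem IsColoringOn.mono (hf : G.IsColoringOn s k f) (hkm : k ≤ m) : G.IsColoringOn s m f :=
  ⟨fun v hv => (hf.lt v hv).trans_le hkm, hf.ne⟩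

theorem IsColoringOn.extend [DecidableEq V] (hf : G.IsColoringOn (s \ K) k f)
    (hK : G.IsIndepSet (K : Set V)) :
    G.IsColoringOn s (k + 1) fun v => if v ∈ K then k else f v := by
  refine ⟨fun v hv => ?_, fun v hv w hw hvw => ?_⟩
  · split_ifs with hvK
    · exact k.lt_succ_self
    · exact (hf.lt v (mem_sdiff.mpr ⟨hv, hvK⟩)).trans k.lt_succ_self
  · by_cases hvK : v ∈ K <;> by_cases hwK : w ∈ K <;> simp only [hvK, hwK, if_true, if_false]
    · exact absurd hvw (hK hvK hwK hvw.ne)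
    · exact (hf.lt w (mem_sdiff.mpr ⟨hw, hwK⟩)).ne'
    · exact (hf.lt v (mem_sdiff.mpr ⟨hv, hvK⟩)).ne
    · exact hf.ne v (mem_sdiff.mpr ⟨hv, hvK⟩) w (mem_sdiff.mpr ⟨hw, hwK⟩) hvw

theorem IsColoringOn.exists_mem_eq_of_isNClique (hf : G.IsColoringOn s k f) (hQs : Q ⊆ s)
    (hQ : G.IsNClique k Q) {i : ℕ} (hi : i < k) : ∃ q ∈ Q, f q = i := by
  classical
  have hinj : Set.InjOn f Q := fun u hu v hv huv => by
    by_contra hne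
    exact hf.ne u (hQs hu) v (hQs hv) (hQ.isClique hu hv hne) huv
  have himage : Q.image f = range k :=
    eq_of_subset_of_card_le (fun c hc => by
      obtain ⟨q, hq, rfl⟩ := mem_image.mp hc
      exact mem_range.mpr (hf.lt q (hQs hq)))
      (by rw [card_image_of_injOn hinj, hQ.card_eq, card_range])
  exact mem_image.mp (himage ▸ mem_range.mpr hi)

theorem IsColoringOn.exists_top_of_color (hf : G.IsColoringOn s k f) (t : V → β) (hQs : Q ⊆ s)
    (hQ : G.IsNClique k Q) {i : ℕ} (hi : i < k) :
    ∃ p ∈ s, f p = i ∧ (∃ Q ⊆ s, G.IsNClique k Q ∧ p ∈ Q) ∧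
      ∀ Q ⊆ s, G.IsNClique k Q → ∀ v ∈ Q, f v = i → t v ≤ t p := by
  classical
  set M := s.filter fun v => f v = i ∧ ∃ Q ⊆ s, G.IsNClique k Q ∧ v ∈ Q
  have hM : M.Nonempty := by
    obtain ⟨q, hq, hfq⟩ := hf.exists_mem_eq_of_isNClique hQs hQ hi
    exact ⟨q, mem_filter.mpr ⟨hQs hq, hfq, Q, hQs, hQ, hq⟩⟩
  obtain ⟨p, hpM, hpmax⟩ := M.exists_max_image t hM
  obtain ⟨hp, hfp, hpQ⟩ := mem_filter.mp hpM
  exact ⟨p, hp, hfp, hpQ, fun Q hQs hQ v hv hfv =>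
    hpmax v (mem_filter.mpr ⟨hQs hv, hfv, Q, hQs, hQ, hv⟩)⟩

theorem IsCocomparabilityOrder.adj_of_top_lt (hG : G.IsCocomparabilityOrder t)
    (hf : G.IsColoringOn s k f) {p q : V} (hp : p ∈ s) (hpk : f p < k)
    (hpmax : ∀ Q ⊆ s, G.IsNClique k Q → ∀ v ∈ Q, f v = f p → t v ≤ t p)
    (hQs : Q ⊆ s) (hQ : G.IsNClique k Q) (hq : q ∈ Q) (hpq : t p < t q) : G.Adj p q := by
  obtain ⟨b, hbQ, hfb⟩ := hf.exists_mem_eq_of_isNClique hQs hQ hpk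
  have hbp : t b ≤ t p := hpmax Q hQs hQ b hbQ hfb
  have hbq : b ≠ q := by
    rintro rfl
    exact (hbp.trans_lt hpq).false
  by_contra hnpq
  obtain rfl | hbp_ne := eq_or_ne b p
  · exact hnpq (hQ.isClique hbQ hq hbq)
  have hnbp : ¬G.Adj b p := fun h => hf.ne b (hQs hbQ) p hp h hfb
  exact hG.not_adj_trans hnbp hnpq (hbp.lt_of_ne (hG.ne_of_not_adj hbp_ne hnbp)) hpq
    (hQ.isClique hbQ hq hbq)

/-- The colour classes of `f` are chains, and their highest vertices that lie in maximum cliques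
form a maximum clique. If `a` is not adjacent to the one of colour `i`, then `a` together with the
vertices of colour `i` below it is a chain meeting every maximum clique of `s`. -/
theorem IsCocomparabilityOrder.exists_isNClique_or_isIndepSet [DecidableEq V]
    (hG : G.IsCocomparabilityOrder t) (hf : G.IsColoringOn s (G.cliqueNumOn s) f) {a : V}
    (has : a ∉ s) (hmax : ∀ v ∈ s, t v ≤ t a) :
    (∃ Q ⊆ s, G.IsNClique (G.cliqueNumOn s) Q ∧ ∀ v ∈ Q, G.Adj a v) ∨
      ∃ K ⊆ s, G.IsIndepSet ↑(insert a K) ∧ G.cliqueNumOn (s \ K) < G.cliqueNumOn s := by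
  set k := G.cliqueNumOn s
  obtain ⟨Q₀, hQ₀s, hQ₀⟩ := G.exists_isNClique_cliqueNumOn s
  have : Nonempty V := ⟨a⟩
  choose! top htop_mem htop_color htop_clique htop_max using
    fun i (hi : i < k) => hf.exists_top_of_color t hQ₀s hQ₀ hi
  have htop_lt : ∀ i < k, ∀ j < k, t (top i) < t (top j) → G.Adj (top i) (top j) := by
    intro i hi j hj hlt
    obtain ⟨Q, hQs, hQ, hjQ⟩ := htop_clique j hj
    refine hG.adj_of_top_lt hf (htop_mem i hi) ?_ ?_ hQs hQ hjQ hlt <;> rw [htop_color i hi]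
    exacts [hi, htop_max i hi]
  by_cases hall : ∀ i < k, G.Adj a (top i)
  · left
    have htop_inj : Set.InjOn top (range k : Set ℕ) := fun i hi j hj hij => by
      rw [coe_range, Set.mem_Iio] at hi hj
      rw [← htop_color i hi, ← htop_color j hj, hij]
    refine ⟨(range k).image top, fun v hv => ?_, ⟨fun u hu v hv huv => ?_, ?_⟩, fun v hv => ?_⟩
    · obtain ⟨i, hi, rfl⟩ := mem_image.mp hv
      exact htop_mem i (mem_range.mp hi)
    · obtain ⟨i, hi, rfl⟩ := mem_image.mp hu
      obtain ⟨j, hj, rfl⟩ := mem_image.mp hv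
      rw [mem_range] at hi hj
      by_contra hn
      rcases (hG.ne_of_not_adj huv hn).lt_or_gt with hlt | hlt
      · exact hn (htop_lt i hi j hj hlt)
      · exact hn (htop_lt j hj i hi hlt).symm
    · rw [card_image_of_injOn htop_inj, card_range]
    · obtain ⟨i, hi, rfl⟩ := mem_image.mp hv
      exact hall i (mem_range.mp hi)
  · right
    push Not at hall
    obtain ⟨i, hi, hai⟩ := hall
    set K := s.filter fun v => f v = i ∧ t v ≤ t (top i)
    have hK : G.IsIndepSet (K : Set V) := fun v hv w hw _ hvw => by
      obtain ⟨hvs, hfv, -⟩ := mem_filter.mp hv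
      obtain ⟨hws, hfw, -⟩ := mem_filter.mp hw
      exact hf.ne v hvs w hws hvw (hfv.trans hfw.symm)
    have hKa : ∀ v ∈ K, ¬G.Adj v a := by
      intro v hv
      obtain ⟨hvs, hfv, hvt⟩ := mem_filter.mp hv
      have hta : t (top i) < t a := (hmax _ (htop_mem i hi)).lt_of_ne
        (hG.ne_of_not_adj (ne_of_mem_of_not_mem (htop_mem i hi) has) fun h => hai h.symm)
      obtain rfl | hvtop := eq_or_ne v (top i)
      · exact fun h => hai h.symm
      have hnv : ¬G.Adj v (top i) := fun h => hf.ne v hvs _ (htop_mem i hi) h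
        (hfv.trans (htop_color i hi).symm)
      exact hG.not_adj_trans hnv (fun h => hai h.symm)
        (hvt.lt_of_ne (hG.ne_of_not_adj hvtop hnv)) hta
    refine ⟨K, filter_subset _ _, ?_, ?_⟩
    · rw [coe_insert]
      exact hK.insert fun v hv _ => ⟨fun h => hKa v hv h.symm, hKa v hv⟩
    · refine (cliqueNumOn_mono sdiff_subset).lt_of_ne fun hk => ?_
      obtain ⟨Q, hQs, hQ⟩ := G.exists_isNClique_cliqueNumOn (s \ K)
      rw [hk] at hQ
      have hQs' : Q ⊆ s := hQs.trans sdiff_subset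
      obtain ⟨q, hq, hfq⟩ := hf.exists_mem_eq_of_isNClique hQs' hQ hi
      have hqK : q ∈ K := mem_filter.mpr ⟨hQs' hq, hfq, htop_max i hi Q hQs' hQ q hq hfq⟩
      exact (mem_sdiff.mp (hQs hq)).2 hqK

/-- Dilworth's theorem for the order of `hG`, by Galvin's induction. -/
theorem IsCocomparabilityOrder.exists_isColoringOn_cliqueNumOn [DecidableEq V]
    (hG : G.IsCocomparabilityOrder t) (s : Finset V) :
    ∃ f, G.IsColoringOn s (G.cliqueNumOn s) f := by
  induction s using Finset.strongInduction with
  | H s ih =>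
  rcases s.eq_empty_or_nonempty with rfl | hs
  · exact ⟨0, by simp, by simp⟩
  obtain ⟨a, has, hmax⟩ := s.exists_max_image t hs
  obtain ⟨f, hf⟩ := ih (s.erase a) (erase_ssubset has)
  have hk : G.cliqueNumOn (s.erase a) ≤ G.cliqueNumOn s := cliqueNumOn_mono (erase_subset a s)
  rcases hG.exists_isNClique_or_isIndepSet hf (notMem_erase a s)
    fun v hv => hmax v (mem_of_mem_erase hv) with ⟨Q, hQs, hQ, haQ⟩ | ⟨K, hKs, hK, hKk⟩
  · have hQa : G.IsNClique (G.cliqueNumOn (s.erase a) + 1) (insert a Q) := hQ.insert haQ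
    have hf' : G.IsColoringOn (s \ {a}) (G.cliqueNumOn (s.erase a)) f :=
      sdiff_singleton_eq_erase a s ▸ hf
    refine ⟨_, (hf'.extend (by simp)).mono ?_⟩
    exact hQa.card_eq ▸ hQa.isClique.card_le_cliqueNumOn
      (insert_subset has (hQs.trans (erase_subset a s)))
  · have hsK : s \ insert a K ⊆ s.erase a \ K := fun v hv => by
      simp only [mem_sdiff, mem_insert, not_or, mem_erase] at hv ⊢
      exact ⟨⟨hv.2.1, hv.1⟩, hv.2.2⟩
    obtain ⟨g, hg⟩ := ih (s \ insert a K) (sdiff_ssubset (insert_subset has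
      (hKs.trans (erase_subset a s))) (insert_nonempty a K))
    have hgk : G.cliqueNumOn (s \ insert a K) + 1 ≤ G.cliqueNumOn (s.erase a) :=
      (cliqueNumOn_mono hsK).trans_lt hKk
    exact ⟨_, (hg.extend hK).mono (hgk.trans hk)⟩

theorem IsCocomparabilityOrder.chromaticNumber_eq_cliqueNum [Finite V]
    (hG : G.IsCocomparabilityOrder t) : G.chromaticNumber = G.cliqueNum := by
  classical
  have := Fintype.ofFinite V
  obtain ⟨f, hf⟩ := hG.exists_isColoringOn_cliqueNumOn univ
  obtain ⟨Q, -, hQ⟩ := G.exists_isNClique_cliqueNumOn univ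
  have hcol : G.Colorable (G.cliqueNumOn univ) :=
    ⟨Coloring.mk (fun v => ⟨f v, hf.lt v (mem_univ v)⟩) fun hvw =>
      Fin.ne_of_val_ne (hf.ne _ (mem_univ _) _ (mem_univ _) hvw)⟩
  refine le_antisymm (hcol.chromaticNumber_le.trans ?_) G.cliqueNum_le_chromaticNumber
  exact_mod_cast hQ.card_eq ▸ hQ.isClique.card_le_cliqueNum

end Finset

theorem IsCocomparabilityOrder.isPerfect [Fintype V] (hG : G.IsCocomparabilityOrder t) :
    IsPerfect G := fun s => (hG.induce s).chromaticNumber_eq_cliqueNum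

end SimpleGraph

section Strip

open Metric Set
open scoped RealInnerProductSpace

variable {E : Type*} [NormedAddCommGroup E] [InnerProductSpace ℝ E] {υ b y z : E}

theorem norm_sq_eq_inner_sq_add_norm_sub_sq (hυ : ‖υ‖ = 1) (w : E) :
    ‖w‖ ^ 2 = ⟪w, υ⟫ ^ 2 + ‖w - ⟪w, υ⟫ • υ‖ ^ 2 := by
  rw [norm_sub_sq_real, norm_smul, real_inner_smul_right, hυ, Real.norm_eq_abs, mul_one, sq_abs]
  ring

theorem norm_sub_inner_smul_le_infDist (hυ : ‖υ‖ = 1) (y b : E) :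
    ‖(y - b) - ⟪y - b, υ⟫ • υ‖ ≤ infDist y (range fun t : ℝ => t • υ + b) := by
  refine (le_infDist (range_nonempty _)).mpr ?_
  rintro _ ⟨c, rfl⟩
  have h := norm_sq_eq_inner_sq_add_norm_sub_sq hυ (y - (c • υ + b))
  have hperp : (y - (c • υ + b)) - ⟪y - (c • υ + b), υ⟫ • υ = (y - b) - ⟪y - b, υ⟫ • υ := by
    simp only [inner_sub_left, inner_add_left, real_inner_smul_left, real_inner_self_eq_norm_sq, hυ]
    module
  rw [hperp] at h
  rw [dist_eq_norm]
  nlinarith [sq_nonneg ⟪y - (c • υ + b), υ⟫, norm_nonneg ((y - b) - ⟪y - b, υ⟫ • υ),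
    norm_nonneg (y - (c • υ + b))]

theorem half_le_abs_inner_sub (hυ : ‖υ‖ = 1)
    (hy : infDist y (range fun t : ℝ => t • υ + b) ≤ √3 / 4)
    (hz : infDist z (range fun t : ℝ => t • υ + b) ≤ √3 / 4) (hyz : 1 ≤ ‖y - z‖) :
    1 / 2 ≤ |⟪y, υ⟫ - ⟪z, υ⟫| := by
  have hperp : (y - z) - ⟪y - z, υ⟫ • υ =
      ((y - b) - ⟪y - b, υ⟫ • υ) - ((z - b) - ⟪z - b, υ⟫ • υ) := by
    simp only [inner_sub_left]
    module
  have hle : ‖(y - z) - ⟪y - z, υ⟫ • υ‖ ≤ √3 / 2 := by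
    rw [hperp]
    calc _ ≤ ‖(y - b) - ⟪y - b, υ⟫ • υ‖ + ‖(z - b) - ⟪z - b, υ⟫ • υ‖ := norm_sub_le _ _
      _ ≤ √3 / 4 + √3 / 4 := add_le_add ((norm_sub_inner_smul_le_infDist hυ y b).trans hy)
          ((norm_sub_inner_smul_le_infDist hυ z b).trans hz)
      _ = √3 / 2 := by ring
  have h := norm_sq_eq_inner_sq_add_norm_sub_sq hυ (y - z)
  have h3 : √3 ^ 2 = 3 := Real.sq_sqrt (by norm_num)
  rw [← inner_sub_left, ← sq_le_sq₀ (by norm_num) (abs_nonneg _), sq_abs]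
  nlinarith [norm_nonneg ((y - z) - ⟪y - z, υ⟫ • υ)]

theorem distGraph_isCocomparabilityOrder {N : ℕ} {x : Fin N → E} (hυ : ‖υ‖ = 1)
    (hx : ∀ i, infDist (x i) (range fun t : ℝ => t • υ + b) ≤ √3 / 4) :
    (distGraph x).IsCocomparabilityOrder fun i => ⟪x i, υ⟫ := by
  have hfar : ∀ {i j}, i ≠ j → ¬(distGraph x).Adj i j → 1 / 2 ≤ |⟪x i, υ⟫ - ⟪x j, υ⟫| :=
    fun hij hn => half_le_abs_inner_sub hυ (hx _) (hx _) (not_lt.mp fun h => hn ⟨hij, h⟩)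
  refine ⟨fun i j hij hn heq => ?_, fun u v w huv hvw htuv htvw hadj => ?_⟩
  · have h := hfar hij hn
    rw [heq, sub_self, abs_zero] at h
    norm_num at h
  · have h₁ := hfar (ne_of_apply_ne (fun i => ⟪x i, υ⟫) htuv.ne) huv
    have h₂ := hfar (ne_of_apply_ne (fun i => ⟪x i, υ⟫) htvw.ne) hvw
    rw [abs_sub_comm, abs_of_pos (sub_pos.mpr htuv)] at h₁
    rw [abs_sub_comm, abs_of_pos (sub_pos.mpr htvw)] at h₂
    have hcs := abs_real_inner_le_norm (x u - x w) υ
    rw [hυ, mul_one, inner_sub_left, abs_sub_comm, abs_of_pos (by linarith)] at hcs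
    linarith [hadj.2]

end Strip

theorem distGraph_isPerfect
    (d N : ℕ) (x : Fin N → EuclideanSpace ℝ (Fin d))
    (υ b : EuclideanSpace ℝ (Fin d)) (hυ : ‖υ‖ = 1)
    (L : Set (EuclideanSpace ℝ (Fin d)))
    (hL : L = Set.range (fun t : ℝ => t • υ + b))
    (hx : ∀ i, Metric.infDist (x i) L ≤ Real.sqrt 3 / 4) :
    IsPerfect (distGraph x) := by
  subst hL
  exact (distGraph_isCocomparabilityOrder hυ hx).isPerfect
end

section
/- Let S be a real normed space, X uniform on a finite multiset S₀ ⊂ S with Q̃(X,1) ≤ α, and suppose S₀ lies within distance 1/8 (or √3/4 if S is Hilbert) of a line L in S. Then there exist K ≤ α|S₀| and a partition of S₀ into multisets S₁,...,S_K such that for each j and each pair of distinct points x, y ∈ S_j, ‖x - y‖ ≥ 1. -/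
open MeasureTheory
open scoped ENNReal

private lemma exists_r_greatest {α : Type*} (r : α → α → Prop)
    (htrans : ∀ a b c, r a b → r b c → r a c)
    (s : Finset α) (hs : s.Nonempty)
    (htot : ∀ a ∈ s, ∀ b ∈ s, r a b ∨ r b a) :
    ∃ m ∈ s, ∀ z ∈ s, r z m := by
  classical
  induction s using Finset.cons_induction with
  | empty => exact absurd hs (by simp)
  | cons x s hx ih =>
    rcases s.eq_empty_or_nonempty with rfl | hne
    · refine ⟨x, by simp, ?_⟩
      intro z hz
      simp only [Finset.cons_empty, Finset.mem_singleton] at hz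
      subst hz
      rcases htot z (by simp) z (by simp) with h | h <;> exact h
    · obtain ⟨m, hm, hmax⟩ := ih hne (fun a ha b hb =>
        htot a (Finset.mem_cons_of_mem ha) b (Finset.mem_cons_of_mem hb))
      rcases htot x (Finset.mem_cons_self x s) m (Finset.mem_cons_of_mem hm) with h | h
      · refine ⟨m, Finset.mem_cons_of_mem hm, ?_⟩
        intro z hz
        rcases Finset.mem_cons.mp hz with rfl | hz
        · exact h
        · exact hmax z hz
      · refine ⟨x, Finset.mem_cons_self x s, ?_⟩
        intro z hz
        rcases Finset.mem_cons.mp hz with rfl | hz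
        · rcases htot z (Finset.mem_cons_self z s) z (Finset.mem_cons_self z s) with h' | h' <;> exact h'
        · exact htrans _ _ _ (hmax z hz) h

private lemma exists_r_maximal {α : Type*} (r : α → α → Prop)
    (hanti : ∀ a b, r a b → r b a → a = b)
    (htrans : ∀ a b c, r a b → r b c → r a c)
    (s : Finset α) (hs : s.Nonempty) :
    ∃ m ∈ s, ∀ z ∈ s, r m z → z = m := by
  classical
  induction s using Finset.cons_induction with
  | empty => exact absurd hs (by simp)
  | cons x s hx ih =>
    rcases s.eq_empty_or_nonempty with rfl | hne
    · exact ⟨x, by simp, by intro z hz _; simpa using hz⟩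
    · obtain ⟨m, hm, hmax⟩ := ih hne
      by_cases hmx : r m x
      · refine ⟨x, Finset.mem_cons_self x s, ?_⟩
        intro z hz hxz
        rcases Finset.mem_cons.mp hz with rfl | hz
        · rfl
        · have : z = m := hmax z hz (htrans _ _ _ hmx hxz)
          subst this
          exact (hanti _ _ hxz hmx).symm
      · refine ⟨m, Finset.mem_cons_of_mem hm, ?_⟩
        intro z hz hmz
        rcases Finset.mem_cons.mp hz with rfl | hz
        · exact absurd hmz hmx
        · exact hmax z hz hmz

private lemma dilworth {α : Type*} [DecidableEq α] (r : α → α → Prop)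
    (hrefl : ∀ a, r a a) (hanti : ∀ a b, r a b → r b a → a = b)
    (htrans : ∀ a b c, r a b → r b c → r a c) (s : Finset α) :
    ∃ (k : ℕ) (f : α → ℕ) (A : Finset α),
      (∀ a ∈ s, f a < k) ∧
      (∀ a ∈ s, ∀ b ∈ s, f a = f b → r a b ∨ r b a) ∧
      A ⊆ s ∧ (∀ a ∈ A, ∀ b ∈ A, a ≠ b → ¬ r a b) ∧ k ≤ A.card := by
  classical
  induction s using Finset.strongInduction with
  | _ s ih =>
  rcases s.eq_empty_or_nonempty with rfl | hne
  · exact ⟨0, fun _ => 0, ∅, by simp, by simp, by simp, by simp, le_refl _⟩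
  obtain ⟨a, ha, hamax⟩ := exists_r_maximal r hanti htrans s hne
  set s' := s.erase a with hs'def
  obtain ⟨k₀, f', A₀, hf'lt, hf'chain, hA₀sub, hA₀anti, hk₀A₀⟩ :=
    ih s' (Finset.erase_ssubset ha)
  set I := s'.image f' with hIdef
  -- every antichain in s' has card ≤ I.card
  have antichain_le : ∀ S ⊆ s', (∀ u ∈ S, ∀ v ∈ S, u ≠ v → ¬ r u v) → S.card ≤ I.card := by
    intro S hSsub hSanti
    apply Finset.card_le_card_of_injOn f'
    · intro z hz; exact Finset.mem_image_of_mem _ (hSsub hz)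
    · intro u hu v hv huv
      by_contra hne'
      rcases hf'chain u (hSsub hu) v (hSsub hv) huv with h | h
      · exact hSanti u hu v hv hne' h
      · exact hSanti v hv u hu (Ne.symm hne') h
  have hIle : I.card ≤ k₀ := by
    have : I ⊆ Finset.range k₀ := by
      intro c hc
      obtain ⟨z, hz, rfl⟩ := Finset.mem_image.mp hc
      exact Finset.mem_range.mpr (hf'lt z hz)
    simpa using Finset.card_le_card this
  have hIcard : I.card = k₀ :=
    le_antisymm hIle (le_trans hk₀A₀ (antichain_le A₀ hA₀sub hA₀anti))
  have hA₀card : A₀.card = k₀ :=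
    le_antisymm (by rw [← hIcard]; exact antichain_le A₀ hA₀sub hA₀anti) hk₀A₀
  -- any antichain of card k₀ in s' meets every color class
  have meets : ∀ S ⊆ s', (∀ u ∈ S, ∀ v ∈ S, u ≠ v → ¬ r u v) → S.card = k₀ →
      ∀ c ∈ I, ∃ y ∈ S, f' y = c := by
    intro S hSsub hSanti hScard c hc
    have hsub : S.image f' ⊆ I := by
      intro d hd
      obtain ⟨z, hz, rfl⟩ := Finset.mem_image.mp hd
      exact Finset.mem_image_of_mem _ (hSsub hz)
    have hinj : Set.InjOn f' S := by
      intro u hu v hv huv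
      by_contra hne'
      rcases hf'chain u (hSsub hu) v (hSsub hv) huv with h | h
      · exact hSanti u hu v hv hne' h
      · exact hSanti v hv u hu (Ne.symm hne') h
    have hcard : (S.image f').card = I.card := by
      rw [Finset.card_image_of_injOn hinj, hScard, hIcard]
    have : S.image f' = I := Finset.eq_of_subset_of_card_le hsub (le_of_eq hcard.symm)
    rw [← this] at hc
    obtain ⟨y, hy, hyc⟩ := Finset.mem_image.mp hc
    exact ⟨y, hy, hyc⟩
  -- the eligible elements and tops
  set elig : α → Prop := fun z =>
    ∃ S, S ⊆ s' ∧ (∀ u ∈ S, ∀ v ∈ S, u ≠ v → ¬ r u v) ∧ S.card = k₀ ∧ z ∈ S with heligdef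
  set E : ℕ → Finset α := fun c => s'.filter (fun z => f' z = c ∧ elig z) with hEdef
  have htopex : ∀ c : ℕ, ∃ m, c ∈ I → m ∈ E c ∧ ∀ z ∈ E c, r z m := by
    intro c
    by_cases hc : c ∈ I
    · obtain ⟨y, hy, hyc⟩ := meets A₀ hA₀sub hA₀anti hA₀card c hc
      have hyE : y ∈ E c :=
        Finset.mem_filter.mpr ⟨hA₀sub hy, hyc, ⟨A₀, hA₀sub, hA₀anti, hA₀card, hy⟩⟩
      have htot : ∀ u ∈ E c, ∀ v ∈ E c, r u v ∨ r v u := by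
        intro u hu v hv
        obtain ⟨hu', hufc, -⟩ := Finset.mem_filter.mp hu
        obtain ⟨hv', hvfc, -⟩ := Finset.mem_filter.mp hv
        exact hf'chain u hu' v hv' (hufc.trans hvfc.symm)
      obtain ⟨m, hm, hmax⟩ := exists_r_greatest r htrans (E c) ⟨y, hyE⟩ htot
      exact ⟨m, fun _ => ⟨hm, hmax⟩⟩
    · exact ⟨a, fun h => absurd h hc⟩
  choose top htop using htopex
  set A := I.image top with hAdef
  have htopmem : ∀ c ∈ I, top c ∈ E c := fun c hc => (htop c hc).1
  have htopf : ∀ c ∈ I, f' (top c) = c := fun c hc =>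
    ((Finset.mem_filter.mp (htopmem c hc)).2).1
  have htops' : ∀ c ∈ I, top c ∈ s' := fun c hc =>
    (Finset.mem_filter.mp (htopmem c hc)).1
  have htopinj : Set.InjOn top I := by
    intro c hc c' hc' h
    rw [← htopf c hc, ← htopf c' hc', h]
  have hAcard : A.card = k₀ := by
    rw [hAdef, Finset.card_image_of_injOn htopinj, hIcard]
  have hAsub : A ⊆ s' := by
    intro z hz
    obtain ⟨c, hc, rfl⟩ := Finset.mem_image.mp hz
    exact htops' c hc
  have hAanti : ∀ u ∈ A, ∀ v ∈ A, u ≠ v → ¬ r u v := by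
    intro u hu v hv huv hruv
    obtain ⟨c, hc, rfl⟩ := Finset.mem_image.mp hu
    obtain ⟨c', hc', rfl⟩ := Finset.mem_image.mp hv
    have hcc' : c ≠ c' := fun h => huv (by rw [h])
    obtain ⟨-, -, S, hS1, hS2, hS3, hS4⟩ := Finset.mem_filter.mp (htopmem c' hc')
    obtain ⟨y, hy, hyc⟩ := meets S hS1 hS2 hS3 c hc
    have hyE : y ∈ E c := Finset.mem_filter.mpr ⟨hS1 hy, hyc, ⟨S, hS1, hS2, hS3, hy⟩⟩
    have h1 : r y (top c) := (htop c hc).2 y hyE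
    have h2 : r y (top c') := htrans _ _ _ h1 hruv
    have hyne : y ≠ top c' := by
      intro h
      apply hcc'
      rw [← hyc, h, htopf c' hc']
    exact hS2 y hy (top c') hS4 hyne h2
  have has' : a ∉ s' := Finset.notMem_erase a s
  have hs'sub : s' ⊆ s := Finset.erase_subset a s
  by_cases hcase : ∀ c ∈ I, ¬ r (top c) a
  · -- new chain {a}
    refine ⟨k₀ + 1, fun z => if z = a then k₀ else f' z, insert a A, ?_, ?_, ?_, ?_, ?_⟩
    · intro z hz
      by_cases h : z = a
      · simp [h]
      · simp only [if_neg h]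
        have : z ∈ s' := Finset.mem_erase.mpr ⟨h, hz⟩
        exact lt_trans (hf'lt z this) (Nat.lt_succ_self _)
    · intro u hu v hv huv
      by_cases h1 : u = a <;> by_cases h2 : v = a
      · rw [h1, h2]; exact Or.inl (hrefl a)
      · exfalso
        simp only [if_pos h1, if_neg h2] at huv
        exact absurd huv.symm (Nat.ne_of_lt (hf'lt v (Finset.mem_erase.mpr ⟨h2, hv⟩)))
      · exfalso
        simp only [if_neg h1, if_pos h2] at huv
        exact absurd huv (Nat.ne_of_lt (hf'lt u (Finset.mem_erase.mpr ⟨h1, hu⟩)))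
      · simp only [if_neg h1, if_neg h2] at huv
        exact hf'chain u (Finset.mem_erase.mpr ⟨h1, hu⟩) v (Finset.mem_erase.mpr ⟨h2, hv⟩) huv
    · intro z hz
      rcases Finset.mem_insert.mp hz with rfl | hz
      · exact ha
      · exact hs'sub (hAsub hz)
    · intro u hu v hv huv
      rcases Finset.mem_insert.mp hu with heu | hu' <;>
        rcases Finset.mem_insert.mp hv with hev | hv'
      · exact absurd (heu.trans hev.symm) huv
      · -- u = a, v ∈ A : ¬ r a v
        subst heu
        obtain ⟨c, hc, rfl⟩ := Finset.mem_image.mp hv'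
        intro hrav
        have := hamax (top c) (hs'sub (htops' c hc)) hrav
        exact has' (this ▸ htops' c hc)
      · subst hev
        obtain ⟨c, hc, rfl⟩ := Finset.mem_image.mp hu'
        exact hcase c hc
      · exact hAanti u hu' v hv' huv
    · have : a ∉ A := fun h => has' (hAsub h)
      rw [Finset.card_insert_of_notMem this, hAcard]
  · push_neg at hcase
    obtain ⟨c, hcI, hrca⟩ := hcase
    set K : Finset α := insert a (s'.filter fun z => f' z = c ∧ r z (top c)) with hKdef
    have haK : a ∈ K := Finset.mem_insert_self a _
    have hKchain : ∀ u ∈ K, ∀ v ∈ K, r u v ∨ r v u := by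
      intro u hu v hv
      rcases Finset.mem_insert.mp hu with heu | hu' <;>
        rcases Finset.mem_insert.mp hv with hev | hv'
      · rw [heu, hev]; exact Or.inl (hrefl a)
      · obtain ⟨hv1, hv2, hv3⟩ := Finset.mem_filter.mp hv'
        rw [heu]
        exact Or.inr (htrans _ _ _ hv3 hrca)
      · obtain ⟨hu1, hu2, hu3⟩ := Finset.mem_filter.mp hu'
        rw [hev]
        exact Or.inl (htrans _ _ _ hu3 hrca)
      · obtain ⟨hu1, hu2, -⟩ := Finset.mem_filter.mp hu'
        obtain ⟨hv1, hv2, -⟩ := Finset.mem_filter.mp hv'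
        exact hf'chain u hu1 v hv1 (hu2.trans hv2.symm)
    set s'' := s \ K with hs''def
    have hss : s'' ⊂ s := by
      refine Finset.ssubset_iff_of_subset (Finset.sdiff_subset) |>.mpr ?_
      exact ⟨a, ha, by simp [hs''def, haK]⟩
    obtain ⟨k'', f'', A'', h1, h2, h3, h4, h5⟩ := ih s'' hss
    have hs''s' : s'' ⊆ s' := by
      intro z hz
      obtain ⟨hz1, hz2⟩ := Finset.mem_sdiff.mp hz
      refine Finset.mem_erase.mpr ⟨?_, hz1⟩
      intro h; exact hz2 (h ▸ haK)
    have hlt : k'' < k₀ := by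
      rcases Nat.lt_or_ge A''.card k₀ with h | h
      · exact lt_of_le_of_lt h5 h
      · exfalso
        have hcard : A''.card = k₀ :=
          le_antisymm (by rw [← hIcard]; exact antichain_le A'' (Finset.Subset.trans h3 hs''s') h4) h
        obtain ⟨y, hy, hyc⟩ := meets A'' (Finset.Subset.trans h3 hs''s') h4 hcard c hcI
        have hyE : y ∈ E c := Finset.mem_filter.mpr
          ⟨hs''s' (h3 hy), hyc, ⟨A'', Finset.Subset.trans h3 hs''s', h4, hcard, hy⟩⟩
        have hryt : r y (top c) := (htop c hcI).2 y hyE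
        have hyK : y ∈ K := Finset.mem_insert_of_mem
          (Finset.mem_filter.mpr ⟨hs''s' (h3 hy), hyc, hryt⟩)
        exact (Finset.mem_sdiff.mp (h3 hy)).2 hyK
    refine ⟨k'' + 1, fun z => if z ∈ K then k'' else f'' z, A, ?_, ?_, ?_, hAanti, ?_⟩
    · intro z hz
      by_cases h : z ∈ K
      · simp [h]
      · simp only [if_neg h]
        exact lt_trans (h1 z (Finset.mem_sdiff.mpr ⟨hz, h⟩)) (Nat.lt_succ_self _)
    · intro u hu v hv huv
      by_cases hu' : u ∈ K <;> by_cases hv' : v ∈ K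
      · exact hKchain u hu' v hv'
      · exfalso
        simp only [if_pos hu', if_neg hv'] at huv
        exact absurd huv.symm (Nat.ne_of_lt (h1 v (Finset.mem_sdiff.mpr ⟨hv, hv'⟩)))
      · exfalso
        simp only [if_neg hu', if_pos hv'] at huv
        exact absurd huv (Nat.ne_of_lt (h1 u (Finset.mem_sdiff.mpr ⟨hu, hu'⟩)))
      · simp only [if_neg hu', if_neg hv'] at huv
        exact h2 u (Finset.mem_sdiff.mpr ⟨hu, hu'⟩) v (Finset.mem_sdiff.mpr ⟨hv, hv'⟩) huv
    · exact Finset.Subset.trans hAsub hs'sub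
    · rw [hAcard]; exact hlt

open MeasureTheory
open scoped ENNReal

theorem decomposition_into_blocks
    {E : Type*} [NormedAddCommGroup E] [NormedSpace ℝ E]
    [MeasurableSpace E] [BorelSpace E]
    (N : ℕ) (hN : 1 ≤ N) (x : Fin N → E) (α : ℝ) (hα : α ∈ Set.Ioc (0 : ℝ) 1)
    (μ : Measure E)
    (hμ : μ = (N : ℝ≥0∞)⁻¹ • ∑ i : Fin N, Measure.dirac (x i))
    (hconc : ∀ B : Set E, IsOpen B → Bornology.IsBounded B → Metric.diam B ≤ 1 →
      μ B ≤ ENNReal.ofReal α)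
    (υ b : E) (hυ : ‖υ‖ = 1)
    (L : Set E) (hL : L = Set.range (fun t : ℝ => t • υ + b))
    (hx : ∀ i, Metric.infDist (x i) L ≤ 1 / 8) :
    ∃ K : ℕ, (K : ℝ) ≤ α * N ∧
      ∃ c : Fin N → Fin K,
        ∀ i j : Fin N, i ≠ j → c i = c j → 1 ≤ ‖x i - x j‖ := by
  classical
  -- extract line parameters
  have hLne : L.Nonempty := by
    rw [hL]; exact ⟨b, ⟨0, by simp⟩⟩
  have hext : ∀ i, ∃ τ : ℝ, ‖x i - (τ • υ + b)‖ < 1/6 := by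
    intro i
    have h1 : Metric.infDist (x i) L < 1/6 := lt_of_le_of_lt (hx i) (by norm_num)
    obtain ⟨y, hyL, hdy⟩ := (Metric.infDist_lt_iff hLne).mp h1
    rw [hL] at hyL
    obtain ⟨τ, hτ⟩ := hyL
    refine ⟨τ, ?_⟩
    rw [← dist_eq_norm]
    simpa [hτ] using hdy
  choose t ht using hext
  set p : Fin N → E := fun i => t i • υ + b with hp
  have ht' : ∀ i, ‖x i - p i‖ < 1/6 := by
    intro i; rw [hp]; exact ht i
  have hpt : ∀ i j, ‖p i - p j‖ = |t i - t j| := by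
    intro i j
    have : p i - p j = (t i - t j) • υ := by
      simp only [hp, sub_smul]; abel
    rw [this, norm_smul, hυ, mul_one, Real.norm_eq_abs]
  have keyub : ∀ i j, ‖x i - x j‖ < |t i - t j| + 1/3 := by
    intro i j
    have hd : x i - x j = (x i - p i) + (p i - p j) + (p j - x j) := by abel
    have h3 := norm_add₃_le (E := E) (a := x i - p i) (b := p i - p j) (c := p j - x j)
    rw [← hd] at h3
    have h1 := ht' i
    have h2 : ‖p j - x j‖ < 1/6 := by rw [norm_sub_rev]; exact ht' j
    have h4 := hpt i j
    linarith
  have keylb : ∀ i j, |t i - t j| < ‖x i - x j‖ + 1/3 := by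
    intro i j
    have hd : p i - p j = (p i - x i) + (x i - x j) + (x j - p j) := by abel
    have h3 := norm_add₃_le (E := E) (a := p i - x i) (b := x i - x j) (c := x j - p j)
    rw [← hd, hpt i j] at h3
    have h1 : ‖p i - x i‖ < 1/6 := by rw [norm_sub_rev]; exact ht' i
    have h2 : ‖x j - p j‖ < 1/6 := ht' j
    linarith
  -- the comparability relation
  set r : Fin N → Fin N → Prop :=
    fun i j => i = j ∨ (1 ≤ ‖x i - x j‖ ∧ t i ≤ t j) with hrdef
  have hnorm1 : ∀ i j : Fin N, 1 ≤ ‖x i - x j‖ → t i ≤ t j → ¬ (t j ≤ t i) := by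
    intro i j h1 h2 h3
    have h4 : t i = t j := le_antisymm h2 h3
    have h5 := keyub i j
    rw [h4] at h5
    simp at h5
    linarith
  have hrefl : ∀ i, r i i := fun i => Or.inl rfl
  have hanti : ∀ i j, r i j → r j i → i = j := by
    intro i j hij hji
    rcases hij with rfl | ⟨h1, h2⟩
    · rfl
    rcases hji with rfl | ⟨h3, h4⟩
    · rfl
    exact absurd h4 (hnorm1 i j h1 h2)
  have htrans : ∀ i j k, r i j → r j k → r i k := by
    intro i j k hij hjk
    rcases hij with rfl | ⟨h1, h2⟩
    · exact hjk
    rcases hjk with rfl | ⟨h3, h4⟩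
    · exact Or.inr ⟨h1, h2⟩
    by_cases hik : i = k
    · exact Or.inl hik
    have l1 : 2/3 < t j - t i := by
      have := keylb i j
      have habs : t j - t i ≤ |t i - t j| := by
        rw [abs_sub_comm]; exact le_abs_self _
      -- from h1 : 1 ≤ ‖x i - x j‖ and keyub we get t j - t i > 2/3
      have hub := keyub i j
      have : |t i - t j| = t j - t i := by
        rw [abs_sub_comm]; exact abs_of_nonneg (by linarith)
      linarith [this ▸ hub]
    have l2 : 2/3 < t k - t j := by
      have hub := keyub j k
      have : |t j - t k| = t k - t j := by
        rw [abs_sub_comm]; exact abs_of_nonneg (by linarith)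
      linarith [this ▸ hub]
    have l3 : |t i - t k| = t k - t i := by
      rw [abs_sub_comm]; exact abs_of_nonneg (by linarith)
    have l4 := keylb i k
    rw [l3] at l4
    exact Or.inr ⟨by linarith, by linarith⟩
  -- clique bound from the concentration hypothesis
  have hNpos : (0 : ℝ) < N := by exact_mod_cast hN
  have clique_bound : ∀ A : Finset (Fin N),
      (∀ i ∈ A, ∀ j ∈ A, i ≠ j → ‖x i - x j‖ < 1) → (A.card : ℝ) ≤ α * N := by
    intro A hA
    rcases A.eq_empty_or_nonempty with rfl | hAne
    · simp only [Finset.card_empty, Nat.cast_zero]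
      exact mul_nonneg hα.1.le hNpos.le
    have hPne : (A ×ˢ A).Nonempty := hAne.product hAne
    set d : ℝ := (A ×ˢ A).sup' hPne (fun q => ‖x q.1 - x q.2‖) with hddef
    obtain ⟨i₀, hi₀⟩ := hAne
    have hd0 : 0 ≤ d :=
      le_trans (norm_nonneg (x i₀ - x i₀))
        (Finset.le_sup' (fun q : Fin N × Fin N => ‖x q.1 - x q.2‖)
          (Finset.mk_mem_product hi₀ hi₀))
    have hd1 : d < 1 := by
      rw [hddef]
      rw [Finset.sup'_lt_iff]
      rintro ⟨i, j⟩ hij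
      obtain ⟨hi, hj⟩ := Finset.mem_product.mp hij
      by_cases h : i = j
      · subst h; simp
      · exact hA i hi j hj h
    have hdle : ∀ i ∈ A, ∀ j ∈ A, ‖x i - x j‖ ≤ d := by
      intro i hi j hj
      exact Finset.le_sup' (fun q : Fin N × Fin N => ‖x q.1 - x q.2‖)
        (Finset.mk_mem_product hi hj)
    set ρ : ℝ := (1 - d)/2 with hρdef
    have hρ : 0 < ρ := by rw [hρdef]; linarith
    set B : Set E := ⋃ i ∈ A, Metric.ball (x i) ρ with hBdef
    have hBopen : IsOpen B := isOpen_biUnion (fun i _ => Metric.isOpen_ball)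
    have hBdiam : Metric.diam B ≤ 1 := by
      apply Metric.diam_le_of_forall_dist_le zero_le_one
      intro u hu v hv
      simp only [hBdef, Set.mem_iUnion] at hu hv
      obtain ⟨i, hi, hui⟩ := hu
      obtain ⟨j, hj, hvj⟩ := hv
      have h1 : dist u (x i) < ρ := Metric.mem_ball.mp hui
      have h2 : dist v (x j) < ρ := Metric.mem_ball.mp hvj
      have h3 : dist (x i) (x j) ≤ d := by rw [dist_eq_norm]; exact hdle i hi j hj
      calc dist u v ≤ dist u (x i) + dist (x i) (x j) + dist (x j) v :=
            dist_triangle4 u (x i) (x j) v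
        _ ≤ ρ + d + ρ := by
            have h2' : dist (x j) v < ρ := by rw [dist_comm]; exact h2
            linarith
        _ = 1 := by rw [hρdef]; ring
    have hμB := hconc B hBopen
      ((Bornology.isBounded_biUnion_finset A).2 (fun i _ => Metric.isBounded_ball)) hBdiam
    have hmem : ∀ i ∈ A, x i ∈ B := by
      intro i hi
      simp only [hBdef, Set.mem_iUnion]
      exact ⟨i, hi, Metric.mem_ball_self hρ⟩
    have hcount : (A.card : ℝ≥0∞) ≤ (∑ i : Fin N, Measure.dirac (x i)) B := by
      rw [Measure.coe_finset_sum, Finset.sum_apply]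
      calc (A.card : ℝ≥0∞) = ∑ i ∈ A, 1 := by simp
        _ = ∑ i ∈ A, Measure.dirac (x i) B := by
            apply Finset.sum_congr rfl
            intro i hi
            exact (Measure.dirac_apply_of_mem (hmem i hi)).symm
        _ ≤ ∑ i : Fin N, Measure.dirac (x i) B :=
            Finset.sum_le_sum_of_subset (Finset.subset_univ A)
    have hμB' : (N : ℝ≥0∞)⁻¹ * (A.card : ℝ≥0∞) ≤ ENNReal.ofReal α := by
      refine le_trans ?_ hμB
      rw [hμ, Measure.smul_apply, smul_eq_mul]
      exact mul_le_mul_right hcount _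
    have hN0 : (N : ℝ≥0∞) ≠ 0 := by
      simp; omega
    have hNtop : (N : ℝ≥0∞) ≠ ⊤ := ENNReal.natCast_ne_top N
    have hfin : (A.card : ℝ≥0∞) ≤ (N : ℝ≥0∞) * ENNReal.ofReal α := by
      calc (A.card : ℝ≥0∞) = (N : ℝ≥0∞) * ((N : ℝ≥0∞)⁻¹ * (A.card : ℝ≥0∞)) := by
            rw [← mul_assoc, ENNReal.mul_inv_cancel hN0 hNtop, one_mul]
        _ ≤ (N : ℝ≥0∞) * ENNReal.ofReal α := mul_le_mul_right hμB' _
    have hconv : (A.card : ℝ≥0∞) ≤ ENNReal.ofReal (α * N) := by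
      rw [show ENNReal.ofReal (α * N) = (N : ℝ≥0∞) * ENNReal.ofReal α by
        rw [mul_comm α (N:ℝ), ENNReal.ofReal_mul (le_of_lt hNpos)]
        congr 1
        exact ENNReal.ofReal_natCast N]
      exact hfin
    have : ENNReal.ofReal (A.card : ℝ) ≤ ENNReal.ofReal (α * N) := by
      rwa [ENNReal.ofReal_natCast]
    exact (ENNReal.ofReal_le_ofReal_iff (mul_nonneg hα.1.le hNpos.le)).mp this
  -- apply Dilworth
  obtain ⟨k, f, A, hflt, hfchain, hAsub, hAanti, hkA⟩ :=
    dilworth r hrefl hanti htrans (Finset.univ : Finset (Fin N))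
  have hAclique : ∀ i ∈ A, ∀ j ∈ A, i ≠ j → ‖x i - x j‖ < 1 := by
    intro i hi j hj hij
    have h1 := hAanti i hi j hj hij
    have h2 := hAanti j hj i hi (Ne.symm hij)
    rcases le_total (t i) (t j) with h | h
    · by_contra hc
      exact h1 (Or.inr ⟨le_of_not_gt hc, h⟩)
    · by_contra hc
      refine h2 (Or.inr ⟨?_, h⟩)
      rw [norm_sub_rev]
      exact le_of_not_gt hc
  have hcard : (A.card : ℝ) ≤ α * N := clique_bound A hAclique
  refine ⟨k, ?_, ?_⟩
  · calc (k : ℝ) ≤ (A.card : ℝ) := by exact_mod_cast hkA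
      _ ≤ α * N := hcard
  · refine ⟨fun i => ⟨f i, hflt i (Finset.mem_univ i)⟩, ?_⟩
    intro i j hij hcij
    have hfij : f i = f j := by
      simpa using congrArg Fin.val hcij
    rcases hfchain i (Finset.mem_univ i) j (Finset.mem_univ j) hfij with h | h
    · rcases h with h' | ⟨h1, h2⟩
      · exact absurd h' hij
      · exact h1
    · rcases h with h' | ⟨h1, h2⟩
      · exact absurd h'.symm hij
      · rw [norm_sub_rev]; exact h1
end

section
/- Let A = {x₁,...,x_a} and B = {y₁,...,y_b} be nonempty finite sets in a real normed space S such that any two distinct points within A or within B are at distance ≥ 1. Let υ be a unit vector with supporting functional f, and assume f(x₁) ≤ ... ≤ f(x_a), f(y₁) ≤ ... ≤ f(y_b), and |f(x) - f(y)| ≥ 1/2 for distinct x,y both in A or both in B. Then A × B (identifying (x,y) with x+y) can be decomposed into n = min(a,b) sets S_{m-n+1}, S_{m-n+3}, ..., S_{m+n-1} with m = max(a,b), where |S_t| = t and for each pair of distinct elements u, v ∈ S_t one has ‖u - v‖ ≥ 1 and moreover |f(u) - f(v)| ≥ 1/2. -/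
/-!
Index `A` and `B` in increasing order of `f`, so that `A + B` becomes the grid
`[0, a) × [0, b)`. The grid splits into `min a b` hooks of sizes `m - n + 1, m - n + 3, …`,
each of which is a chain for the componentwise order. Along a chain, two distinct points either
share a summand, and are then apart because `A` or `B` is, or both summands strictly increase,
in which case `f` grows by at least `1` and `‖·‖ ≥ |f|` gives norm distance `≥ 1`.
-/

open Finset

section Grid

namespace Fin

theorem card_filter_val_eq {n k : ℕ} (hk : k < n) : #{i : Fin n | (i : ℕ) = k} = 1 :=
  card_eq_one.2 ⟨⟨k, hk⟩, by ext; simp [Fin.ext_iff]⟩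

theorem card_filter_le_val {n k : ℕ} : #{i : Fin n | k ≤ (i : ℕ)} = n - k := by
  have h := card_filter_add_card_filter_not (s := (univ : Finset (Fin n))) (fun i => (i : ℕ) < k)
  simp only [not_lt, card_univ, Fintype.card_fin, card_filter_val_lt] at h
  omega

end Fin

/-- For `a ≤ b`, the `t`-th chain of the grid `[0, a) × [0, b)` is the hook
`{(i, a - 1 - t) | i ≤ t} ∪ {(t, j) | a - t ≤ j}`, of size `b - a + 1 + 2 t`. -/
def hookIndex (a i j : ℕ) : ℕ := if i + j < a then a - 1 - j else i

variable {a i j i' j' t : ℕ}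

theorem hookIndex_lt (hi : i < a) : hookIndex a i j < a := by
  unfold hookIndex; split <;> omega

theorem hookIndex_eq_iff (ht : t < a) :
    hookIndex a i j = t ↔ (i < t + 1 ∧ j = a - 1 - t) ∨ (i = t ∧ a - t ≤ j) := by
  unfold hookIndex; split <;> omega

theorem le_or_le_of_hookIndex_eq (h : hookIndex a i j = hookIndex a i' j') :
    (i ≤ i' ∧ j ≤ j') ∨ (i' ≤ i ∧ j' ≤ j) := by
  unfold hookIndex at h; split at h <;> split at h <;> omega

theorem card_hookIndex_eq {b : ℕ} (hab : a ≤ b) (ht : t < a) :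
    #{p : Fin a × Fin b | hookIndex a p.1 p.2 = t} = b - a + 1 + 2 * t := by
  let fixedSnd := ({i : Fin a | (i : ℕ) < t + 1} : Finset _) ×ˢ
    ({j : Fin b | (j : ℕ) = a - 1 - t} : Finset _)
  let fixedFst := ({i : Fin a | (i : ℕ) = t} : Finset _) ×ˢ
    ({j : Fin b | a - t ≤ (j : ℕ)} : Finset _)
  have hfiber : ({p | hookIndex a p.1 p.2 = t} : Finset _) = fixedSnd ∪ fixedFst := by
    ext ⟨i, j⟩
    simp [fixedSnd, fixedFst, hookIndex_eq_iff ht]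
  have hdisj : Disjoint fixedSnd fixedFst := by
    simp only [fixedSnd, fixedFst, disjoint_left, mem_product, mem_filter, mem_univ, true_and]
    omega
  rw [hfiber, card_union_of_disjoint hdisj, card_product, card_product, Fin.card_filter_val_lt,
    Fin.card_filter_val_eq (by omega), Fin.card_filter_val_eq ht, Fin.card_filter_le_val]
  omega

theorem exists_grid_chain_partition (a b : ℕ) :
    ∃ c : Fin a × Fin b → Fin (min a b),
      (∀ t : Fin (min a b), #{p | c p = t} = max a b - min a b + 1 + 2 * (t : ℕ)) ∧
      ∀ p q, c p = c q → p ≤ q ∨ q ≤ p := by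
  wlog hab : a ≤ b generalizing a b
  · obtain ⟨c, hcard, hchain⟩ := this b a (le_of_not_ge hab)
    refine ⟨fun p => Fin.cast (min_comm b a) (c p.swap), fun t => ?_, fun p q hpq => ?_⟩
    · calc _ = #{q | c q = Fin.cast (min_comm a b) t} :=
            card_nbij' Prod.swap Prod.swap (fun _ => by simp [Fin.ext_iff])
              (fun _ => by simp [Fin.ext_iff]) (fun _ _ => rfl) (fun _ _ => rfl)
        _ = _ := by rw [hcard, Fin.val_cast, max_comm, min_comm]
    · simpa only [Prod.swap_le_swap] using hchain p.swap q.swap (by simpa [Fin.ext_iff] using hpq)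
  have hmin : min a b = a := min_eq_left hab
  refine ⟨fun p => Fin.cast hmin.symm ⟨hookIndex a p.1 p.2, hookIndex_lt p.1.isLt⟩,
    fun t => ?_, fun p q hpq => ?_⟩
  · simp only [Fin.ext_iff, Fin.val_cast]
    rw [card_hookIndex_eq hab (by omega)]
    omega
  · simpa only [Prod.le_def, Fin.le_def] using
      le_or_le_of_hookIndex_eq (Fin.ext_iff.1 hpq)

end Grid

section Separation

variable {E : Type*} [SeminormedAddCommGroup E] [NormedSpace ℝ E] (f : E →L[ℝ] ℝ)

def Apart (u v : E) : Prop := 1 ≤ ‖u - v‖ ∧ 1 / 2 ≤ |f u - f v|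

variable {f}

theorem Apart.symm {u v : E} (h : Apart f u v) : Apart f v u := by
  rwa [Apart, norm_sub_rev, abs_sub_comm]

theorem add_le_of_monotone_of_ne {ι : Type*} [Preorder ι] {g : ι → ℝ} {δ : ℝ}
    (hg : Monotone g) (hsep : ∀ i j, i ≠ j → δ ≤ |g i - g j|) {i j : ι} (hij : i ≤ j)
    (hne : i ≠ j) :
    g i + δ ≤ g j := by
  have h := hsep i j hne
  rw [abs_sub_comm, abs_of_nonneg (sub_nonneg.2 (hg hij))] at h
  linarith

theorem apart_add_of_lt {ι κ : Type*} [PartialOrder ι] [PartialOrder κ]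
    (hf : ∀ z : E, |f z| ≤ ‖z‖) {x : ι → E} {y : κ → E}
    (hx : ∀ i j, i ≠ j → Apart f (x i) (x j)) (hy : ∀ i j, i ≠ j → Apart f (y i) (y j))
    (hxmono : Monotone (fun i => f (x i))) (hymono : Monotone (fun i => f (y i)))
    {p q : ι × κ} (hpq : p < q) : Apart f (x p.1 + y p.2) (x q.1 + y q.2) := by
  obtain ⟨i, j⟩ := p
  obtain ⟨i', j'⟩ := q
  obtain ⟨hii', hjj'⟩ : i ≤ i' ∧ j ≤ j' := hpq.le
  by_cases hi : i = i'
  · subst hi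
    have hj : j ≠ j' := by rintro rfl; exact hpq.ne rfl
    simpa only [Apart, add_sub_add_left_eq_sub, map_add] using hy j j' hj
  by_cases hj : j = j'
  · subst hj
    simpa only [Apart, add_sub_add_right_eq_sub, map_add] using hx i i' hi
  have hgain : f (x i + y j) + 1 ≤ f (x i' + y j') := by
    have hxgain := add_le_of_monotone_of_ne hxmono (fun i i' h => (hx i i' h).2) hii' hi
    have hygain := add_le_of_monotone_of_ne hymono (fun j j' h => (hy j j' h).2) hjj' hj
    simp only [map_add]
    linarith
  have hfdist : 1 ≤ |f (x i + y j) - f (x i' + y j')| := by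
    rw [abs_sub_comm]
    exact le_abs.2 (Or.inl (by linarith))
  exact ⟨hfdist.trans (map_sub f _ _ ▸ hf _), by linarith⟩

end Separation

theorem btk_chain_decomposition_general
    {E : Type*} [NormedAddCommGroup E] [NormedSpace ℝ E]
    (a b : ℕ)
    (x : Fin a → E) (y : Fin b → E)
    (hA : ∀ i j : Fin a, i ≠ j → 1 ≤ ‖x i - x j‖)
    (hB : ∀ i j : Fin b, i ≠ j → 1 ≤ ‖y i - y j‖)
    (f : E →L[ℝ] ℝ) (hf : ∀ z : E, |f z| ≤ ‖z‖)
    (hxmono : Monotone (fun i => f (x i))) (hymono : Monotone (fun i => f (y i)))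
    (hAf : ∀ i j : Fin a, i ≠ j → 1 / 2 ≤ |f (x i) - f (x j)|)
    (hBf : ∀ i j : Fin b, i ≠ j → 1 / 2 ≤ |f (y i) - f (y j)|) :
    ∃ c : Fin a × Fin b → Fin (min a b),
      (∀ t : Fin (min a b),
        (Finset.univ.filter (fun p : Fin a × Fin b => c p = t)).card
          = max a b - min a b + 1 + 2 * (t : ℕ)) ∧
      (∀ p q : Fin a × Fin b, p ≠ q → c p = c q →
        1 ≤ ‖(x p.1 + y p.2) - (x q.1 + y q.2)‖ ∧
        1 / 2 ≤ |f (x p.1 + y p.2) - f (x q.1 + y q.2)|) := by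
  obtain ⟨c, hcard, hchain⟩ := exists_grid_chain_partition a b
  have hx : ∀ i j, i ≠ j → Apart f (x i) (x j) := fun i j h => ⟨hA i j h, hAf i j h⟩
  have hy : ∀ i j, i ≠ j → Apart f (y i) (y j) := fun i j h => ⟨hB i j h, hBf i j h⟩
  refine ⟨c, hcard, fun p q hne hpq => ?_⟩
  rcases hchain p q hpq with hle | hle
  · exact apart_add_of_lt hf hx hy hxmono hymono (hle.lt_of_ne hne)
  · exact (apart_add_of_lt hf hx hy hxmono hymono (hle.lt_of_ne hne.symm)).symm

theorem btk_chain_decomposition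
    {E : Type*} [NormedAddCommGroup E] [NormedSpace ℝ E]
    (a b : ℕ) (ha : 1 ≤ a) (hb : 1 ≤ b)
    (x : Fin a → E) (y : Fin b → E)
    (hA : ∀ i j : Fin a, i ≠ j → 1 ≤ ‖x i - x j‖)
    (hB : ∀ i j : Fin b, i ≠ j → 1 ≤ ‖y i - y j‖)
    (υ : E) (hυ : ‖υ‖ = 1)
    (f : E →L[ℝ] ℝ) (hf : ∀ z : E, |f z| ≤ ‖z‖) (hfυ : f υ = 1)
    (hxmono : Monotone (fun i => f (x i))) (hymono : Monotone (fun i => f (y i)))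
    (hAf : ∀ i j : Fin a, i ≠ j → 1 / 2 ≤ |f (x i) - f (x j)|)
    (hBf : ∀ i j : Fin b, i ≠ j → 1 / 2 ≤ |f (y i) - f (y j)|) :
    ∃ c : Fin a × Fin b → Fin (min a b),
      (∀ t : Fin (min a b),
        (Finset.univ.filter (fun p : Fin a × Fin b => c p = t)).card
          = max a b - min a b + 1 + 2 * (t : ℕ)) ∧
      (∀ p q : Fin a × Fin b, p ≠ q → c p = c q →
        1 ≤ ‖(x p.1 + y p.2) - (x q.1 + y q.2)‖ ∧
        1 / 2 ≤ |f (x p.1 + y p.2) - f (x q.1 + y q.2)|) :=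
  btk_chain_decomposition_general a b x y hA hB f hf hxmono hymono hAf hBf
end
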